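/- arXiv:2202.04163 — 2 statements merged into one kernel-verified Lean document; each statement's English description precedes it below -/
import Mathlib

section
/- Let a_1, ..., a_k ∈ F_2^n be linearly independent bit-strings and fix a qubit index j. Let M = exp(iπZ^{a_1}/8)···exp(iπZ^{a_k}/8) X_j exp(-iπZ^{a_1}/8)···exp(-iπZ^{a_k}/8), and write M = ∑_P m_P P over Pauli operators P ∈ {I,X,Y,Z}^{⊗n}. Then the number of P with m_P ≠ 0 equals 2^w, where w is the number of indices l with a_l(j) = 1. -/
open Complex Matrix
noncomputable section

/-- Single-qubit Pauli matrices I, X, Y, Z. -/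
def P1 : Fin 4 → Matrix (Fin 2) (Fin 2) ℂ
  | 0 => 1
  | 1 => !![0, 1; 1, 0]
  | 2 => !![0, -Complex.I; Complex.I, 0]
  | 3 => !![1, 0; 0, -1]

/-- n-qubit Pauli operator indexed by `v : Fin n → Fin 4` (tensor product of single-qubit Paulis). -/
def Pauli {n : ℕ} (v : Fin n → Fin 4) : Matrix (Fin n → Fin 2) (Fin n → Fin 2) ℂ :=
  fun x y => ∏ i, P1 (v i) (x i) (y i)

/-- A Clifford unitary: a unitary mapping every (Hermitian) Pauli to a signed Pauli by conjugation. -/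
def IsClifford {n : ℕ} (C : Matrix (Fin n → Fin 2) (Fin n → Fin 2) ℂ) : Prop :=
  C ∈ Matrix.unitaryGroup (Fin n → Fin 2) ℂ ∧
    ∀ v : Fin n → Fin 4, ∃ w : Fin n → Fin 4, ∃ ε : ℂ,
      (ε = 1 ∨ ε = -1) ∧ C * Pauli v * Cᴴ = ε • Pauli w

/-- exp(iπP/8) for a Pauli P. -/
def pexp {n : ℕ} (v : Fin n → Fin 4) : Matrix (Fin n → Fin 2) (Fin n → Fin 2) ℂ :=
  NormedSpace.exp ((Complex.I * (Real.pi / 8 : ℝ)) • Pauli v)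

/-- exp(-iπP/8) for a Pauli P. -/
def pexpNeg {n : ℕ} (v : Fin n → Fin 4) : Matrix (Fin n → Fin 2) (Fin n → Fin 2) ℂ :=
  NormedSpace.exp (-((Complex.I * (Real.pi / 8 : ℝ)) • Pauli v))

/-- Pauli X on qubit j. -/
def xAt {n : ℕ} (j : Fin n) : Fin n → Fin 4 := fun i => if i = j then 1 else 0

/-- Pauli Z on qubit j. -/
def zAt {n : ℕ} (j : Fin n) : Fin n → Fin 4 := fun i => if i = j then 3 else 0

/-- Z^a for a bit-string a given as booleans. -/
def zOf {n : ℕ} (a : Fin n → Bool) : Fin n → Fin 4 := fun i => if a i then 3 else 0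

/-- Z^a for a bit-string a ∈ F_2^n. -/
def zOfZ {n : ℕ} (a : Fin n → ZMod 2) : Fin n → Fin 4 := fun i => if a i = 1 then 3 else 0

/-- The tuple of Paulis pairwise commutes. -/
def PComm {n m : ℕ} (P : Fin m → Fin n → Fin 4) : Prop :=
  ∀ i j, Commute (Pauli (P i)) (Pauli (P j))

/-- Independence: no P_j equals a product of a subset of the others, up to sign. -/
def Indep {n m : ℕ} (P : Fin m → Fin n → Fin 4) : Prop :=
  ∀ j : Fin m, ∀ S : Finset (Fin m), j ∉ S → ∀ ε : ℂ, (ε = 1 ∨ ε = -1) →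
    Pauli (P j) ≠ ε • (S.toList.map (fun i => Pauli (P i))).prod

/-- The product exp(iπP₁/8)···exp(iπP_m/8). -/
def expProd {n m : ℕ} (P : Fin m → Fin n → Fin 4) :
    Matrix (Fin n → Fin 2) (Fin n → Fin 2) ℂ :=
  ((List.finRange m).map (fun j => pexp (P j))).prod

/-- Equality up to a global phase. -/
def PhaseEq {n : ℕ} (A B : Matrix (Fin n → Fin 2) (Fin n → Fin 2) ℂ) : Prop :=
  ∃ c : ℂ, ‖c‖ = 1 ∧ A = c • B

/-- The channel representation entry, as a complex number. -/
def chanC {n : ℕ} (U : Matrix (Fin n → Fin 2) (Fin n → Fin 2) ℂ)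
    (P Q : Fin n → Fin 4) : ℂ :=
  ((2 : ℂ) ^ n)⁻¹ * Matrix.trace (Pauli P * U * Pauli Q * Uᴴ)

/-- The channel representation: real 4^n × 4^n matrix. -/
def chan {n : ℕ} (U : Matrix (Fin n → Fin 2) (Fin n → Fin 2) ℂ) :
    Matrix (Fin n → Fin 4) (Fin n → Fin 4) ℝ :=
  fun P Q => (chanC U P Q).re

/-- All elements of a finite set of Paulis pairwise commute. -/
def SetComm {n : ℕ} (S : Finset (Fin n → Fin 4)) : Prop :=
  ∀ P ∈ S, ∀ Q ∈ S, Commute (Pauli P) (Pauli Q)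

/-- Independence for a finite set of Paulis: no element is a product of a subset
of the others, up to sign. -/
def SetIndep {n : ℕ} (S : Finset (Fin n → Fin 4)) : Prop :=
  ∀ P ∈ S, ∀ T ⊆ S.erase P, ∀ ε : ℂ, (ε = 1 ∨ ε = -1) →
    Pauli P ≠ ε • (T.toList.map Pauli).prod

/-- The layer T^{⊗k₁} ⊗ (T†)^{⊗k₂} ⊗ I^{⊗(n-k₁-k₂)}. -/
def TLayer (n k₁ k₂ : ℕ) : Matrix (Fin n → Fin 2) (Fin n → Fin 2) ℂ :=
  Matrix.diagonal (fun x => ∏ i : Fin n,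
    if x i = 1 then
      (if (i : ℕ) < k₁ then Complex.exp (Complex.I * (Real.pi / 4 : ℝ))
       else if (i : ℕ) < k₁ + k₂ then Complex.exp (-(Complex.I * (Real.pi / 4 : ℝ)))
       else 1)
    else 1)

/-- T-depth at most one: C₁ (T^{⊗k₁} ⊗ T†^{⊗k₂} ⊗ I) C₂ up to global phase. -/
def TDepthAtMostOne (n : ℕ) (U : Matrix (Fin n → Fin 2) (Fin n → Fin 2) ℂ) : Prop :=
  ∃ (k₁ k₂ : ℕ) (C₁ C₂ : Matrix (Fin n → Fin 2) (Fin n → Fin 2) ℂ) (c : ℂ),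
    k₁ + k₂ ≤ n ∧ IsClifford C₁ ∧ IsClifford C₂ ∧ ‖c‖ = 1 ∧
    U = c • (C₁ * TLayer n k₁ k₂ * C₂)

/-- T-depth exactly one: as above with at least one T gate. -/
def TDepthOne (n : ℕ) (U : Matrix (Fin n → Fin 2) (Fin n → Fin 2) ℂ) : Prop :=
  ∃ (k₁ k₂ : ℕ) (C₁ C₂ : Matrix (Fin n → Fin 2) (Fin n → Fin 2) ℂ) (c : ℂ),
    1 ≤ k₁ + k₂ ∧ k₁ + k₂ ≤ n ∧ IsClifford C₁ ∧ IsClifford C₂ ∧ ‖c‖ = 1 ∧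
    U = c • (C₁ * TLayer n k₁ k₂ * C₂)

/-!
The diagonal entry of `Z^b` at the basis string `x` is the character `χ_x(b) = (-1)^{b·x}`, and `X_j`
sends `x` to `x + e_j`. Hence `Tr(P M)` is a sum over `x` of `P_{x, x+e_j}` times
`∏_l exp(iπ/8 χ_{x+e_j}(a_l)) exp(-iπ/8 χ_x(a_l))`. Since `χ_{x+e_j}(a_l) = (-1)^{a_l(j)} χ_x(a_l)`,
the `l`-th factor is `1` when `a_l(j) = 0` and `(1 - i χ_x(a_l))/√2` when `a_l(j) = 1`; over the
set `W` of the latter the product expands to `2^{-w/2} ∑_{S ⊆ W} (-i)^{|S|} χ_x(∑_{l ∈ S} a_l)`.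
A Pauli string has `P_{x, x+e_j} ≠ 0` only if its X-part is `e_j`, and then `P_{x, x+e_j}` is a
phase times `χ_x(z)` for its Z-part `z`. Orthogonality of characters leaves `Tr(P M) ≠ 0` iff
`z = ∑_{l ∈ S} a_l` for some `S ⊆ W`, and linear independence makes `S ↦ ∑_{l ∈ S} a_l` injective,
so there are exactly `2^w` such `P`.
-/

lemma neg_one_pow_val_add_mul {R : Type*} [Ring R] (s t : ZMod 2) (u : ℕ) :
    (-1 : R) ^ ((s + t).val * u) = (-1) ^ (s.val * u) * (-1) ^ (t.val * u) := by
  rw [← pow_add, ← add_mul, neg_one_pow_eq_pow_mod_two, Nat.mul_mod, ZMod.val_add, Nat.mod_mod,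
    ← Nat.mul_mod, ← neg_one_pow_eq_pow_mod_two]

lemma neg_one_pow_mul_val_add {R : Type*} [Ring R] (m : ℕ) (u w : Fin 2) :
    (-1 : R) ^ (m * (u + w).val) = (-1) ^ (m * u.val) * (-1) ^ (m * w.val) := by
  rw [← pow_add, ← mul_add, neg_one_pow_eq_pow_mod_two, Nat.mul_mod, Fin.val_add, Nat.mod_mod,
    ← Nat.mul_mod, ← neg_one_pow_eq_pow_mod_two]

lemma AddChar.map_sum_eq_prod {ι A M : Type*} [AddCommMonoid A] [CommMonoid M]
    (ψ : AddChar A M) (s : Finset ι) (f : ι → A) : ψ (∑ i ∈ s, f i) = ∏ i ∈ s, ψ (f i) := by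
  classical
  induction s using Finset.induction_on with
  | empty => simp
  | insert i s hi ih => rw [Finset.sum_insert hi, map_add_eq_mul, ih, Finset.prod_insert hi]

lemma Matrix.list_prod_map_diagonal {ι m α : Type*} [Fintype m] [DecidableEq m]
    [CommSemiring α] (L : List ι) (f : ι → m → α) :
    (L.map fun i => diagonal (f i)).prod = diagonal (L.map f).prod := by
  simpa [Function.comp_def] using (map_list_prod (diagonalRingHom m α) (L.map f)).symm

lemma LinearIndependent.injective_finset_sum {ι R M : Type*} [Semiring R] [Nontrivial R]
    [AddCommMonoid M] [Module R M] {v : ι → M} (hv : LinearIndependent R v) :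
    Function.Injective fun s : Finset ι => ∑ i ∈ s, v i := by
  classical
  intro s t hst
  have hsum (u : Finset ι) :
      ∑ i ∈ s ∪ t, (if i ∈ u then (1 : R) else 0) • v i = ∑ i ∈ (s ∪ t) ∩ u, v i := by
    simp [ite_smul, Finset.sum_ite_mem]
  have hcoeff := linearIndependent_iff'ₛ.1 hv (s ∪ t) (fun i => if i ∈ s then 1 else 0)
    (fun i => if i ∈ t then 1 else 0) <| by
    rw [hsum, hsum, Finset.union_inter_cancel_left, Finset.union_inter_cancel_right]
    exact hst
  ext i
  by_cases hi : i ∈ s ∪ t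
  · have := hcoeff i hi
    split_ifs at this <;> simp_all
  · simp_all

lemma exp_mul_I_mul_of_eq_one_or (θ s : ℂ) (hs : s = 1 ∨ s = -1) :
    Complex.exp (θ * I * s) = Complex.cos θ + Complex.sin θ * I * s := by
  rcases hs with rfl | rfl
  · simp [Complex.exp_mul_I]
  · simp [← neg_mul, Complex.exp_mul_I]

lemma exp_neg_pi_div_four_mul_I_mul (s : ℂ) (hs : s = 1 ∨ s = -1) :
    Complex.exp (-(2 * (I * (Real.pi / 8 : ℝ))) * s) = (√2 / 2 : ℝ) * (1 - I * s) := by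
  have hθ : -(2 * (I * (Real.pi / 8 : ℝ))) = ((-(Real.pi / 4) : ℝ) : ℂ) * I := by push_cast; ring
  rw [hθ, exp_mul_I_mul_of_eq_one_or _ s hs, ← Complex.ofReal_cos, ← Complex.ofReal_sin,
    Real.cos_neg, Real.sin_neg, Real.cos_pi_div_four, Real.sin_pi_div_four]
  push_cast
  ring

-- `P1 p = phase p • Z ^ zBit p * X ^ xBit p`.
def xBit : Fin 4 → Fin 2 := ![0, 1, 1, 0]

def zBit : Fin 4 → ZMod 2 := ![0, 0, 1, 1]

def phase : Fin 4 → ℂ := ![1, 1, -I, 1]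

lemma P1_apply (p : Fin 4) (s t : Fin 2) :
    P1 p s t = if t = s + xBit p then phase p * (-1) ^ ((zBit p).val * s.val) else 0 := by
  fin_cases p <;> fin_cases s <;> fin_cases t <;> simp +decide [P1, zBit, phase]

def pauliBitsEquiv : Fin 4 ≃ Fin 2 × ZMod 2 :=
  Equiv.ofBijective (fun p => (xBit p, zBit p)) (by decide)

section

variable {n k : ℕ}

def xPart (v : Fin n → Fin 4) : Fin n → Fin 2 := fun i => xBit (v i)

def zPart (v : Fin n → Fin 4) : Fin n → ZMod 2 := fun i => zBit (v i)

def pauliPhase (v : Fin n → Fin 4) : ℂ := ∏ i, phase (v i)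

lemma pauliPhase_ne_zero (v : Fin n → Fin 4) : pauliPhase v ≠ 0 :=
  Finset.prod_ne_zero_iff.2 fun i _ => by generalize v i = p; fin_cases p <;> simp [phase]

lemma card_xPart_eq_and_zPart_mem (e : Fin n → Fin 2) (V : Finset (Fin n → ZMod 2)) :
    Nat.card {P : Fin n → Fin 4 // xPart P = e ∧ zPart P ∈ V} = V.card := by
  let pauliEquiv : (Fin n → Fin 4) ≃ (Fin n → Fin 2) × (Fin n → ZMod 2) :=
    (Equiv.arrowCongr (Equiv.refl _) pauliBitsEquiv).trans (Equiv.arrowProdEquivProdArrow _ _ _)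
  have hmem (P : Fin n → Fin 4) :
      xPart P = e ∧ zPart P ∈ V ↔ pauliEquiv P ∈ ({e} ×ˢ V : Finset _) := by
    rw [show pauliEquiv P = (xPart P, zPart P) from rfl, Finset.mem_product, Finset.mem_singleton]
  rw [Nat.card_congr (pauliEquiv.subtypeEquiv hmem), Nat.card_eq_fintype_card, Fintype.card_coe,
    Finset.card_product, Finset.card_singleton, one_mul]

def zChar (x : Fin n → Fin 2) : AddChar (Fin n → ZMod 2) ℂ where
  toFun b := ∏ i, (-1) ^ ((b i).val * (x i).val)
  map_zero_eq_one' := by simp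
  map_add_eq_mul' b c := by
    simp only [Pi.add_apply, neg_one_pow_val_add_mul, Finset.prod_mul_distrib]

lemma zChar_apply (x : Fin n → Fin 2) (b : Fin n → ZMod 2) :
    zChar x b = ∏ i, (-1) ^ ((b i).val * (x i).val) := rfl

lemma zChar_add_left (x y : Fin n → Fin 2) (b : Fin n → ZMod 2) :
    zChar (x + y) b = zChar x b * zChar y b := by
  simp only [zChar_apply, Pi.add_apply, neg_one_pow_mul_val_add, Finset.prod_mul_distrib]

lemma zChar_single (j : Fin n) (b : Fin n → ZMod 2) :
    zChar (Pi.single j 1) b = (-1) ^ (b j).val := by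
  rw [zChar_apply, Finset.prod_eq_single j (fun i _ hij => by simp [hij]) (by simp)]
  simp

lemma zChar_eq_one_or_eq_neg_one (x : Fin n → Fin 2) (b : Fin n → ZMod 2) :
    zChar x b = 1 ∨ zChar x b = -1 := by
  rw [zChar_apply, Finset.prod_pow_eq_pow_sum]
  exact neg_one_pow_eq_or ℂ _

lemma sum_zChar (b : Fin n → ZMod 2) :
    ∑ x, zChar x b = if b = 0 then 2 ^ n else 0 := by
  have hsum (s : ZMod 2) : ∑ u : Fin 2, (-1 : ℂ) ^ (s.val * u.val) = if s = 0 then 2 else 0 := by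
    obtain rfl | rfl : s = 0 ∨ s = 1 := by revert s; decide
    · simp
    · simp [ZMod.val_one]
  simp only [zChar_apply]
  rw [← Fintype.prod_sum (fun i (u : Fin 2) => (-1 : ℂ) ^ ((b i).val * u.val))]
  simp only [hsum, Finset.prod_ite_zero, funext_iff, Pi.zero_apply, Finset.mem_univ,
    true_imp_iff, Finset.prod_const, Finset.card_univ, Fintype.card_fin]

lemma Pauli_apply (v : Fin n → Fin 4) (x y : Fin n → Fin 2) :
    Pauli v x y = if y = x + xPart v then pauliPhase v * zChar x (zPart v) else 0 := by
  simp only [Pauli, P1_apply, Finset.prod_ite_zero, funext_iff, Pi.add_apply, pauliPhase,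
    zChar_apply, ← Finset.prod_mul_distrib, Finset.mem_univ, true_imp_iff, xPart, zPart]

lemma Pauli_xAt_apply (j : Fin n) (x y : Fin n → Fin 2) :
    Pauli (xAt j) x y = if y = x + Pi.single j 1 then 1 else 0 := by
  have hx : xPart (xAt j) = Pi.single j 1 := by
    ext i; by_cases h : i = j <;> simp [xPart, xAt, xBit, h]
  have hz : zPart (xAt j) = 0 := by
    ext i; by_cases h : i = j <;> simp [zPart, xAt, zBit, h]
  have hph : pauliPhase (xAt j) = 1 :=
    Finset.prod_eq_one fun i _ => by by_cases h : i = j <;> simp [xAt, phase, h]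
  simp [Pauli_apply, hx, hz, hph]

lemma Pauli_zOfZ (b : Fin n → ZMod 2) : Pauli (zOfZ b) = diagonal fun x => zChar x b := by
  have hb (i : Fin n) : b i = 0 ∨ b i = 1 := by generalize b i = t; revert t; decide
  have hx : xPart (zOfZ b) = 0 := by
    ext i; rcases hb i with h | h <;> simp [xPart, zOfZ, xBit, h]
  have hz : zPart (zOfZ b) = b := by
    ext i; rcases hb i with h | h <;> simp [zPart, zOfZ, zBit, h]
  have hph : pauliPhase (zOfZ b) = 1 :=
    Finset.prod_eq_one fun i _ => by rcases hb i with h | h <;> simp [zOfZ, phase, h]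
  ext x y
  simp [Pauli_apply, hx, hz, hph, diagonal_apply, eq_comm]

lemma exp_smul_Pauli_zOfZ (z : ℂ) (b : Fin n → ZMod 2) :
    NormedSpace.exp (z • Pauli (zOfZ b)) = diagonal fun x => Complex.exp (z * zChar x b) := by
  rw [Pauli_zOfZ, ← diagonal_smul, exp_diagonal]
  ext x y
  simp [diagonal_apply, Complex.exp_eq_exp_ℂ]

lemma list_prod_exp_smul_Pauli_zOfZ (z : ℂ) (a : Fin k → Fin n → ZMod 2) :
    ((List.finRange k).map fun l => NormedSpace.exp (z • Pauli (zOfZ (a l)))).prod =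
      diagonal fun x => ∏ l, Complex.exp (z * zChar x (a l)) := by
  simp_rw [exp_smul_Pauli_zOfZ, list_prod_map_diagonal, ← Fin.prod_univ_def, Finset.prod_fn]

lemma trace_mul_diagonal_mul_xAt_mul_diagonal (j : Fin n)
    (A : Matrix (Fin n → Fin 2) (Fin n → Fin 2) ℂ) (d₁ d₂ : (Fin n → Fin 2) → ℂ) :
    trace (A * (diagonal d₁ * Pauli (xAt j) * diagonal d₂)) =
      ∑ y, A y (y + Pi.single j 1) * (d₁ (y + Pi.single j 1) * d₂ y) := by
  have hB (x y : Fin n → Fin 2) :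
      (diagonal d₁ * Pauli (xAt j) * diagonal d₂) x y =
        if x = y + Pi.single j 1 then d₁ x * d₂ y else 0 := by
    have hflip : y = x + Pi.single j 1 ↔ x = y + Pi.single j 1 := by
      have h2 : Pi.single j 1 + Pi.single j 1 = (0 : Fin n → Fin 2) :=
        funext fun i => (by decide : ∀ u : Fin 2, u + u = 0) _
      constructor <;> rintro rfl <;> rw [add_assoc, h2, add_zero]
    simp [mul_diagonal, diagonal_mul, Pauli_xAt_apply, hflip]
  simp only [trace, diag_apply]
  refine Finset.sum_congr rfl fun y _ => ?_
  simp only [mul_apply (M := A), hB, mul_ite, mul_zero, Finset.sum_ite_eq', Finset.mem_univ,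
    if_true]

lemma exp_zChar_add_single_mul_exp (j : Fin n) (b : Fin n → ZMod 2) (y : Fin n → Fin 2) :
    Complex.exp (I * (Real.pi / 8 : ℝ) * zChar (y + Pi.single j 1) b) *
        Complex.exp (-(I * (Real.pi / 8 : ℝ)) * zChar y b) =
      if b j = 1 then (√2 / 2 : ℝ) * (1 - I * zChar y b) else 1 := by
  rw [zChar_add_left, zChar_single, ← Complex.exp_add]
  obtain h | h : b j = 0 ∨ b j = 1 := by generalize b j = t; revert t; decide
  · simp [h]
  · rw [h, if_pos rfl, ← exp_neg_pi_div_four_mul_I_mul _ (zChar_eq_one_or_eq_neg_one y b)]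
    congr 1
    simp [ZMod.val_one]
    ring

lemma prod_one_add_mul_zChar (μ : ℂ) (W : Finset (Fin k)) (a : Fin k → Fin n → ZMod 2)
    (y : Fin n → Fin 2) :
    ∏ l ∈ W, (1 + μ * zChar y (a l)) =
      ∑ S ∈ W.powerset, μ ^ S.card * zChar y (∑ l ∈ S, a l) := by
  simp_rw [add_comm (1 : ℂ), Finset.prod_add, Finset.prod_const_one, mul_one,
    Finset.prod_mul_distrib, Finset.prod_const, AddChar.map_sum_eq_prod]

lemma prod_exp_zChar_add_single_mul (a : Fin k → Fin n → ZMod 2) (j : Fin n)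
    (y : Fin n → Fin 2) :
    (∏ l, Complex.exp (I * (Real.pi / 8 : ℝ) * zChar (y + Pi.single j 1) (a l))) *
        ∏ l, Complex.exp (-(I * (Real.pi / 8 : ℝ)) * zChar y (a l)) =
      (√2 / 2 : ℝ) ^ ({l | a l j = 1} : Finset (Fin k)).card *
        ∑ S ∈ ({l | a l j = 1} : Finset (Fin k)).powerset,
          (-I) ^ S.card * zChar y (∑ l ∈ S, a l) := by
  simp_rw [← Finset.prod_mul_distrib, exp_zChar_add_single_mul_exp, ← Finset.prod_filter,
    Finset.prod_mul_distrib, Finset.prod_const, sub_eq_add_neg, ← neg_mul,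
    prod_one_add_mul_zChar]

def conjXAt (a : Fin k → Fin n → ZMod 2) (j : Fin n) :
    Matrix (Fin n → Fin 2) (Fin n → Fin 2) ℂ :=
  ((List.finRange k).map fun l => pexp (zOfZ (a l))).prod * Pauli (xAt j) *
    ((List.finRange k).map fun l => pexpNeg (zOfZ (a l))).prod

lemma trace_Pauli_mul_conjXAt (a : Fin k → Fin n → ZMod 2) (j : Fin n) (P : Fin n → Fin 4) :
    trace (Pauli P * conjXAt a j) =
      if xPart P = Pi.single j 1 then
        pauliPhase P * (√2 / 2 : ℝ) ^ ({l | a l j = 1} : Finset (Fin k)).card * 2 ^ n *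
          ∑ S ∈ ({l | a l j = 1} : Finset (Fin k)).powerset,
            if ∑ l ∈ S, a l = zPart P then (-I) ^ S.card else 0
      else 0 := by
  have hD₁ := list_prod_exp_smul_Pauli_zOfZ (I * (Real.pi / 8 : ℝ)) a
  have hD₂ := list_prod_exp_smul_Pauli_zOfZ (-(I * (Real.pi / 8 : ℝ))) a
  simp only [neg_smul] at hD₂
  simp only [conjXAt, pexp, pexpNeg, hD₁, hD₂, trace_mul_diagonal_mul_xAt_mul_diagonal,
    prod_exp_zChar_add_single_mul, Pauli_apply, add_right_inj, eq_comm (a := Pi.single j 1)]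
  split_ifs with hx
  · have hchar2 (u v : Fin n → ZMod 2) : u + v = 0 ↔ v = u := by
      rw [add_eq_zero_iff_eq_neg, show -v = v from funext fun i => ZMod.neg_eq_self_mod_two _,
        eq_comm]
    simp only [Finset.mul_sum]
    rw [Finset.sum_comm]
    refine Finset.sum_congr rfl fun S _ => ?_
    have hterm (x : Fin n → Fin 2) :
        pauliPhase P * zChar x (zPart P) *
            ((√2 / 2 : ℝ) ^ ({l | a l j = 1} : Finset (Fin k)).card *
              ((-I) ^ S.card * zChar x (∑ l ∈ S, a l))) =
          pauliPhase P * (√2 / 2 : ℝ) ^ ({l | a l j = 1} : Finset (Fin k)).card * (-I) ^ S.card *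
            zChar x (zPart P + ∑ l ∈ S, a l) := by
      rw [AddChar.map_add_eq_mul]; ring
    simp only [hterm, ← Finset.mul_sum, sum_zChar, hchar2]
    split_ifs <;> ring
  · simp

lemma trace_Pauli_mul_conjXAt_ne_zero_iff {a : Fin k → Fin n → ZMod 2}
    (ha : LinearIndependent (ZMod 2) a) (j : Fin n) (P : Fin n → Fin 4) :
    trace (Pauli P * conjXAt a j) ≠ 0 ↔
      xPart P = Pi.single j 1 ∧
        zPart P ∈ ({l | a l j = 1} : Finset (Fin k)).powerset.image fun S => ∑ l ∈ S, a l := by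
  rw [trace_Pauli_mul_conjXAt]
  split_ifs with hx
  · have hc : pauliPhase P * (√2 / 2 : ℝ) ^ ({l | a l j = 1} : Finset (Fin k)).card * 2 ^ n ≠
        (0 : ℂ) := by
      refine mul_ne_zero (mul_ne_zero (pauliPhase_ne_zero P) (pow_ne_zero _ ?_)) (by simp)
      exact_mod_cast (by positivity : (√2 / 2 : ℝ) ≠ 0)
    rw [mul_ne_zero_iff, and_iff_right hc, Finset.mem_image]
    simp only [hx, true_and]
    constructor
    · intro hsum
      by_contra! hnone
      exact hsum (Finset.sum_eq_zero fun S hS => if_neg (hnone S hS))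
    · rintro ⟨S₀, hS₀, hzS₀⟩
      rw [Finset.sum_eq_single_of_mem S₀ hS₀ fun S _ hS =>
        if_neg fun h => hS (ha.injective_finset_sum (h.trans hzS₀.symm)), if_pos hzS₀]
      exact pow_ne_zero _ (neg_ne_zero.2 I_ne_zero)
  · simp [hx]

end

-- The coefficient `m_P` is `2⁻ⁿ Tr(P M)`, so it is nonzero exactly when the trace is.
/-- Hamming weight lemma: the Pauli expansion of
M = exp(iπZ^{a₁}/8)···exp(iπZ^{a_k}/8) X_j exp(−iπZ^{a₁}/8)···exp(−iπZ^{a_k}/8)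
has exactly 2^w nonzero coefficients, where w = #{l : a_l(j) = 1}.
The coefficient of P is (1/2^n)Tr(Pauli P · M), so nonzeroness is detected by the trace. -/
theorem hamming_weight (n k : ℕ) (a : Fin k → (Fin n → ZMod 2))
    (ha : LinearIndependent (ZMod 2) a) (j : Fin n) :
    Nat.card {P : Fin n → Fin 4 //
        Matrix.trace (Pauli P *
          (((List.finRange k).map (fun l => pexp (zOfZ (a l)))).prod *
            Pauli (xAt j) *
            ((List.finRange k).map (fun l => pexpNeg (zOfZ (a l)))).prod)) ≠ 0} =
      2 ^ Nat.card {l : Fin k // a l j = 1} := by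
  change Nat.card {P // trace (Pauli P * conjXAt a j) ≠ 0} = _
  simp only [trace_Pauli_mul_conjXAt_ne_zero_iff ha j]
  rw [card_xPart_eq_and_zPart_mem, Finset.card_image_of_injective _ ha.injective_finset_sum,
    Finset.card_powerset, Nat.card_eq_fintype_card, Fintype.card_subtype]
end
end

section
/- If a_1, ..., a_k ∈ F_2^n are linearly independent bit-strings, then the product ∏_{l=1}^{k} (I + i Z^{a_l}) expands as a sum of 2^k distinct Pauli operators, each with a nonzero coefficient of absolute value 1. -/
open Complex Matrix
noncomputable section

/-!
Every `Z^a` is diagonal, with the character `x ↦ (-1) ^ ⟨a, x⟩` on its diagonal, so the factors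
`I + i Z^{a_l}` commute and the product expands, as in a commutative ring, into
`∑_S i^{|S|} Z^{∑_{l ∈ S} a_l}` over the `2^k` subsets `S`. Linear independence makes
`S ↦ ∑_{l ∈ S} a_l` injective, so these are `2^k` distinct Paulis with phases `i^{|S|}`.
-/

theorem zmod_two_eq_zero_or_one : ∀ b : ZMod 2, b = 0 ∨ b = 1 := by decide

theorem LinearIndependent.finsetSum_injective {ι R M : Type*} [Ring R] [Nontrivial R]
    [AddCommGroup M] [Module R M] {v : ι → M} (hv : LinearIndependent R v) :
    Function.Injective fun s : Finset ι => ∑ i ∈ s, v i := by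
  classical
  intro s t hst
  have hcomb :
      ∑ i ∈ s ∪ t, ((if i ∈ s then 1 else 0) - (if i ∈ t then 1 else 0) : R) • v i = 0 := by
    simp only [sub_smul, ite_smul, one_smul, zero_smul, Finset.sum_sub_distrib,
      Finset.sum_ite_mem, Finset.union_inter_cancel_left, Finset.union_inter_cancel_right]
    exact sub_eq_zero.2 hst
  ext i
  by_cases hi : i ∈ s ∪ t
  · have := linearIndependent_iff'.1 hv _ _ hcomb i hi
    by_cases his : i ∈ s <;> by_cases hit : i ∈ t <;> simp_all
  · simp_all

/-- The character `x ↦ (-1) ^ ⟨u, x⟩` of `F₂ⁿ`. -/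
def zSign {n : ℕ} (u : Fin n → ZMod 2) : (Fin n → Fin 2) → ℂ :=
  fun x => ∏ i, if u i = 1 ∧ x i = 1 then -1 else 1

theorem P1_ite_apply (b : ZMod 2) (c d : Fin 2) :
    P1 (if b = 1 then 3 else 0) c d = if c = d then (if b = 1 ∧ c = 1 then -1 else 1) else 0 := by
  rcases zmod_two_eq_zero_or_one b with rfl | rfl <;> fin_cases c <;> fin_cases d <;>
    simp +decide [P1]

theorem ite_neg_one_add_eq_mul (b c : ZMod 2) (d : Fin 2) :
    (if b + c = 1 ∧ d = 1 then (-1 : ℂ) else 1) =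
      (if b = 1 ∧ d = 1 then -1 else 1) * (if c = 1 ∧ d = 1 then -1 else 1) := by
  rcases zmod_two_eq_zero_or_one b with rfl | rfl <;>
    rcases zmod_two_eq_zero_or_one c with rfl | rfl <;> fin_cases d <;> simp +decide

section ZPauli

variable {n : ℕ}

theorem pauli_zOfZ (u : Fin n → ZMod 2) : Pauli (zOfZ u) = diagonal (zSign u) := by
  ext x y
  simp only [Pauli, zOfZ, P1_ite_apply, diagonal_apply, zSign]
  split_ifs with hxy
  · subst hxy
    simp
  · obtain ⟨i, hi⟩ := Function.ne_iff.mp hxy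
    exact Finset.prod_eq_zero (Finset.mem_univ i) (if_neg hi)

theorem zSign_zero : zSign (0 : Fin n → ZMod 2) = 1 := by
  funext x
  simp [zSign]

theorem zSign_add (u v : Fin n → ZMod 2) : zSign (u + v) = zSign u * zSign v := by
  funext x
  simp only [Pi.mul_apply, zSign, ← Finset.prod_mul_distrib, Pi.add_apply]
  exact Finset.prod_congr rfl fun i _ => ite_neg_one_add_eq_mul (u i) (v i) (x i)

theorem zSign_sum {ι : Type*} (s : Finset ι) (a : ι → Fin n → ZMod 2) :
    zSign (∑ l ∈ s, a l) = ∏ l ∈ s, zSign (a l) := by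
  classical
  induction s using Finset.induction_on with
  | empty => simp [zSign_zero]
  | insert l s hl ih => rw [Finset.sum_insert hl, Finset.prod_insert hl, zSign_add, ih]

theorem zOfZ_injective : Function.Injective (zOfZ (n := n)) := by
  intro u v h
  funext i
  have hi := congrFun h i
  simp only [zOfZ] at hi
  rcases zmod_two_eq_zero_or_one (u i) with hu | hu <;>
    rcases zmod_two_eq_zero_or_one (v i) with hv | hv <;> simp_all

theorem list_prod_one_add_I_smul_pauli_zOfZ {k : ℕ} (a : Fin k → Fin n → ZMod 2) :
    ((List.finRange k).map fun l => 1 + I • Pauli (zOfZ (a l))).prod =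
      ∑ s : Finset (Fin k), I ^ s.card • Pauli (zOfZ (∑ l ∈ s, a l)) := by
  have hfactor (l : Fin k) : 1 + I • Pauli (zOfZ (a l)) =
      diagonalRingHom (Fin n → Fin 2) ℂ (1 + I • zSign (a l)) := by
    rw [map_add, map_one, diagonalRingHom_apply, diagonal_smul, pauli_zOfZ]
  calc ((List.finRange k).map fun l => 1 + I • Pauli (zOfZ (a l))).prod
      = diagonalRingHom (Fin n → Fin 2) ℂ (∏ l, (1 + I • zSign (a l))) := by
        simp only [hfactor, Fin.prod_univ_def, map_list_prod, List.map_map, Function.comp_def]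
    _ = diagonalRingHom (Fin n → Fin 2) ℂ
          (∑ s : Finset (Fin k), I ^ s.card • zSign (∑ l ∈ s, a l)) := by
        rw [Finset.prod_one_add, Finset.powerset_univ]
        simp only [zSign_sum, Finset.smul_prod]
    _ = ∑ s : Finset (Fin k), I ^ s.card • Pauli (zOfZ (∑ l ∈ s, a l)) := by
        simp only [map_sum, diagonalRingHom_apply, diagonal_smul, pauli_zOfZ]

end ZPauli

/-- for linearly independent a₁,...,a_k ∈ F₂ⁿ, the product
∏_{l=1}^{k}(I + i Z^{a_l}) is a sum of 2^k distinct Pauli operators with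
coefficients of absolute value 1 (up to overall normalization-free phases). -/
theorem product_expansion (n k : ℕ) (a : Fin k → (Fin n → ZMod 2))
    (ha : LinearIndependent (ZMod 2) a) :
    ∃ (f : Finset (Fin n → Fin 4)) (c : (Fin n → Fin 4) → ℂ),
      f.card = 2 ^ k ∧ (∀ P ∈ f, ‖c P‖ = 1) ∧
      ((List.finRange k).map (fun l =>
          (1 : Matrix (Fin n → Fin 2) (Fin n → Fin 2) ℂ) + Complex.I • Pauli (zOfZ (a l)))).prod
        = ∑ P ∈ f, c P • Pauli P := by
  set g : Finset (Fin k) → Fin n → Fin 4 := fun s => zOfZ (∑ l ∈ s, a l)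
  have hg : Function.Injective g := zOfZ_injective.comp ha.finsetSum_injective
  refine ⟨Finset.univ.image g, fun P => I ^ (Function.invFun g P).card, ?_,
    fun _ _ => by simp, ?_⟩
  · rw [Finset.card_image_of_injective _ hg, Finset.card_univ, Fintype.card_finset,
      Fintype.card_fin]
  · rw [list_prod_one_add_I_smul_pauli_zOfZ, Finset.sum_image hg.injOn]
    simp only [g, Function.leftInverse_invFun hg _]
end
end
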